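/- Let ρ ≥ 1. Then lim_{N→∞} Var(H_N)/N = 1/ρ. -/

import Mathlib

open Finset Filter Real Topology

/-- `r_{ρ,n}(i) = ρ^{-i} * C(n-1, i)^{-1}`. -/
noncomputable def rfun (ρ : ℝ) (n i : ℕ) : ℝ := (ρ ^ i * (Nat.choose (n - 1) i : ℝ))⁻¹

/-- `P(H_N ≥ k)` for `k = 1,…,N`, and `0` for `k > N`. -/
noncomputable def tailP (ρ : ℝ) (N k : ℕ) : ℝ :=
  if k ≤ N then (∑ i ∈ Finset.range k, rfun ρ N i)⁻¹ else 0

/-- `P(H_N = k) = P(H_N ≥ k) − P(H_N ≥ k+1)`. -/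
noncomputable def pmfP (ρ : ℝ) (N k : ℕ) : ℝ := tailP ρ N k - tailP ρ N (k + 1)

/-- `E(H_N) = ∑_{k=1}^N P(H_N ≥ k)`. -/
noncomputable def EH (ρ : ℝ) (N : ℕ) : ℝ := ∑ k ∈ Finset.Icc 1 N, tailP ρ N k

/-- `Var(H_N) = ∑_{k=1}^N (k − E(H_N))² P(H_N = k)`. -/
noncomputable def VarH (ρ : ℝ) (N : ℕ) : ℝ :=
  ∑ k ∈ Finset.Icc 1 N, ((k : ℝ) - EH ρ N) ^ 2 * pmfP ρ N k

/-- `P(H_N ≤ t)` for a real threshold `t`. -/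
noncomputable def cdfP (ρ : ℝ) (N : ℕ) (t : ℝ) : ℝ :=
  ∑ k ∈ (Finset.Icc 1 N).filter (fun k : ℕ => (k : ℝ) ≤ t), pmfP ρ N k

/-!
Write `p_k = P(H_N = k)`, `r_k = ρ⁻ᵏ C(N-1,k)⁻¹` and `S_k = ∑_{i<k} r_i ≥ 1`. The `p_k` form a
probability vector with mean `E(H_N)`, so `Var(H_N) = E(N - H_N)² - (N - E(H_N))²`. For `1 ≤ k < N`,
`p_k = r_k / (S_k S_{k+1}) ≤ r_k`, and `r_k ≤ C(N-1,k)⁻¹` as `ρ ≥ 1`. Since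
`∑_{k=2}^{n} (n+1-k)² / C(n,k) ≤ 9` (the middle terms are `O(1/n)` because `C(n,k) ≥ C(n,3)`), only
the `k = 1` term is unbounded: `N - E(H_N) ≤ 1/ρ + 9` and `E(N - H_N)² = (N-1)² p_1 + O(1)`. Finally
`p_1 = r_1 / (1 + r_1)` with `(N-1) r_1 = 1/ρ`, so `(N-1)² p_1 = (N-1)/ρ + O(1)` and
`Var(H_N) = N/ρ + O(1)`.
-/

theorem Finset.sum_Icc_one_sub_succ {R : Type*} [AddCommGroup R] (f : ℕ → R) (n : ℕ) :
    ∑ k ∈ Icc 1 n, (f k - f (k + 1)) = f 1 - f (n + 1) := by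
  induction n with
  | zero => simp
  | succ n ih => rw [sum_Icc_succ_top (by omega), ih]; abel

theorem Finset.sum_Icc_one_mul_sub_succ {R : Type*} [CommRing R] (f : ℕ → R) (n : ℕ) :
    ∑ k ∈ Icc 1 n, (k : R) * (f k - f (k + 1)) = ∑ k ∈ Icc 1 n, f k - n * f (n + 1) := by
  induction n with
  | zero => simp
  | succ n ih => rw [sum_Icc_succ_top (by omega), ih, sum_Icc_succ_top (by omega)]; push_cast; ring

theorem Finset.sum_sq_sub_mul_eq {ι : Type*} (s : Finset ι) {x p : ι → ℝ} {m : ℝ}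
    (hp : ∑ i ∈ s, p i = 1) (hm : ∑ i ∈ s, x i * p i = m) (a : ℝ) :
    ∑ i ∈ s, (x i - m) ^ 2 * p i = ∑ i ∈ s, (a - x i) ^ 2 * p i - (a - m) ^ 2 := by
  have hexpand : ∀ i ∈ s, (a - x i) ^ 2 * p i
      = (x i - m) ^ 2 * p i + 2 * (m - a) * (x i * p i) + (a ^ 2 - m ^ 2) * p i := by
    intro i _; ring
  rw [sum_congr rfl hexpand, sum_add_distrib, sum_add_distrib, ← mul_sum, ← mul_sum, hp, hm]
  ring

theorem tendsto_div_natCast_of_abs_sub_mul_le {a : ℕ → ℝ} {c B : ℝ}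
    (h : ∀ᶠ n in atTop, |a n - c * n| ≤ B) : Tendsto (fun n => a n / n) atTop (𝓝 c) := by
  have hB := tendsto_const_div_atTop_nhds_zero_nat B
  have hbound : ∀ᶠ n : ℕ in atTop, c - B / n ≤ a n / n ∧ a n / n ≤ c + B / n := by
    filter_upwards [h, eventually_gt_atTop 0] with n hn hpos
    have hpos' : (0 : ℝ) < n := by exact_mod_cast hpos
    rw [abs_le] at hn
    constructor <;> field_simp <;> linarith
  exact tendsto_of_tendsto_of_tendsto_of_le_of_le' (by simpa using hB.const_sub c)
    (by simpa using hB.const_add c) (hbound.mono fun _ => And.left) (hbound.mono fun _ => And.right)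

namespace Nat

theorem choose_le_choose_of_le_of_add_le {n a k : ℕ} (hak : a ≤ k) (hkn : a + k ≤ n) :
    n.choose a ≤ n.choose k := by
  wlog hk : 2 * k ≤ n generalizing k
  · rw [← choose_symm (by omega : k ≤ n)]
    exact this (by omega) (by omega) (by omega)
  induction k, hak using Nat.le_induction with
  | base => rfl
  | succ k _ ih =>
    exact (ih (by omega) (by omega)).trans (choose_le_succ_of_lt_half_left (by omega))

theorem two_mul_choose_two (p : ℕ) : 2 * (p + 2).choose 2 = (p + 2) * (p + 1) := by
  have := descFactorial_eq_factorial_mul_choose (p + 2) 2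
  simp [descFactorial, factorial] at this
  linarith

theorem six_mul_choose_three (p : ℕ) : 6 * (p + 3).choose 3 = (p + 3) * (p + 2) * (p + 1) := by
  have := descFactorial_eq_factorial_mul_choose (p + 3) 3
  simp [descFactorial, factorial] at this
  linarith

theorem sq_sub_mul_le_six_mul_choose {n k : ℕ} (hk : 3 ≤ k) (hkn : k < n) :
    (n + 1 - k) ^ 2 * n ≤ 6 * n.choose k := by
  obtain ⟨j, rfl⟩ : ∃ j, n = k + j := ⟨n - k, by omega⟩
  rw [choose_symm_add, show k + j + 1 - k = j + 1 by omega]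
  rcases (by omega : j = 1 ∨ j = 2 ∨ 3 ≤ j) with rfl | rfl | hj
  · rw [choose_one_right]; omega
  · nlinarith [two_mul_choose_two k]
  · obtain ⟨p, hp⟩ : ∃ p, k + j = p + 3 := ⟨k + j - 3, by omega⟩
    have h3 := choose_le_choose_of_le_of_add_le (n := k + j) hj (by omega)
    have hj' : j + 1 ≤ p + 1 := by omega
    rw [hp] at h3 ⊢
    have hsq : (j + 1) ^ 2 ≤ (p + 2) * (p + 1) := by nlinarith
    calc (j + 1) ^ 2 * (p + 3) ≤ (p + 3) * (p + 2) * (p + 1) := by nlinarith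
      _ = 6 * (p + 3).choose 3 := (six_mul_choose_three p).symm
      _ ≤ 6 * (p + 3).choose j := by omega

end Nat

theorem sq_sub_div_choose_le {n k : ℕ} (hk : 3 ≤ k) (hkn : k < n) :
    ((n : ℝ) + 1 - k) ^ 2 / n.choose k ≤ 6 / n := by
  have hchoose : (0 : ℝ) < n.choose k := by exact_mod_cast Nat.choose_pos hkn.le
  rw [div_le_div_iff₀ hchoose (by exact_mod_cast (by omega : 0 < n))]
  have := Nat.sq_sub_mul_le_six_mul_choose hk hkn
  rw [← Nat.cast_le (α := ℝ)] at this
  push_cast [Nat.cast_sub (by omega : k ≤ n + 1)] at this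
  linarith

theorem sum_sq_sub_div_choose_le (n : ℕ) :
    ∑ k ∈ Icc 2 n, ((n : ℝ) + 1 - k) ^ 2 / n.choose k ≤ 9 := by
  rcases le_or_gt n 2 with hn | hn
  · interval_cases n <;> norm_num
  obtain ⟨m, rfl⟩ : ∃ m, n = m + 1 := ⟨n - 1, by omega⟩
  rw [sum_Icc_succ_top (by omega), ← add_sum_Ioc_eq_sum_Icc (by omega)]
  have hfirst : ((m + 1 : ℕ) + 1 - (2 : ℕ) : ℝ) ^ 2 / (m + 1).choose 2 ≤ 2 := by
    obtain ⟨p, rfl⟩ : ∃ p, m = p + 1 := ⟨m - 1, by omega⟩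
    have h := Nat.two_mul_choose_two p
    rw [← Nat.cast_inj (R := ℝ)] at h
    rw [div_le_iff₀ (by exact_mod_cast Nat.choose_pos (by omega))]
    push_cast at h ⊢
    nlinarith
  have hmiddle : ∑ k ∈ Ioc 2 m, ((m + 1 : ℕ) + 1 - k : ℝ) ^ 2 / (m + 1).choose k ≤ 6 := by
    calc _ ≤ ∑ k ∈ Ioc 2 m, 6 / ((m + 1 : ℕ) : ℝ) := by
          refine sum_le_sum fun k hk => ?_
          rw [mem_Ioc] at hk
          exact sq_sub_div_choose_le (by omega) (by omega)
      _ ≤ 6 := by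
          have hcard : ((m - 2 : ℕ) : ℝ) ≤ (m + 1 : ℕ) := by
            exact_mod_cast (by omega : m - 2 ≤ m + 1)
          rw [sum_const, Nat.card_Ioc, nsmul_eq_mul, mul_div_assoc', div_le_iff₀ (by positivity)]
          linarith
  have hlast : ((m + 1 : ℕ) + 1 - (m + 1 : ℕ) : ℝ) ^ 2 / (m + 1).choose (m + 1) = 1 := by
    simp
  linarith

section HeightDistribution

variable {ρ : ℝ} {N k : ℕ}

theorem rfun_zero (ρ : ℝ) (N : ℕ) : rfun ρ N 0 = 1 := by simp [rfun]

theorem rfun_nonneg (hρ : 0 ≤ ρ) : 0 ≤ rfun ρ N k := by unfold rfun; positivity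

theorem rfun_le_inv_choose (hρ : 1 ≤ ρ) : rfun ρ N k ≤ ((N - 1).choose k : ℝ)⁻¹ := by
  rw [rfun, mul_inv]
  exact mul_le_of_le_one_left (by positivity) (inv_le_one_of_one_le₀ (one_le_pow₀ hρ))

theorem sub_one_mul_rfun_one (hN : 2 ≤ N) : ((N : ℝ) - 1) * rfun ρ N 1 = ρ⁻¹ := by
  have hN1 : (N : ℝ) - 1 ≠ 0 := by
    have : (2 : ℝ) ≤ N := by exact_mod_cast hN
    linarith
  rw [rfun, Nat.choose_one_right, Nat.cast_sub (by omega), Nat.cast_one, mul_inv, pow_one,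
    mul_left_comm, mul_inv_cancel₀ hN1, mul_one]

theorem one_le_sum_range_rfun (hρ : 0 ≤ ρ) (hk : 1 ≤ k) : 1 ≤ ∑ i ∈ range k, rfun ρ N i := by
  rw [← rfun_zero ρ N]
  exact single_le_sum (f := rfun ρ N) (fun i _ => rfun_nonneg hρ) (mem_range.mpr hk)

theorem tailP_one (hN : 1 ≤ N) : tailP ρ N 1 = 1 := by
  simp [tailP, hN, rfun_zero]

theorem tailP_of_lt (h : N < k) : tailP ρ N k = 0 := by
  simp [tailP, not_le.mpr h]

theorem pmfP_nonneg (hρ : 0 ≤ ρ) (hk : 1 ≤ k) : 0 ≤ pmfP ρ N k := by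
  have hS := one_le_sum_range_rfun (N := N) hρ hk
  rw [pmfP, sub_nonneg, tailP, tailP]
  split_ifs
  · rw [sum_range_succ]
    exact inv_anti₀ (zero_lt_one.trans_le hS) (le_add_of_nonneg_right (rfun_nonneg hρ))
  · omega
  · exact inv_nonneg.mpr (zero_le_one.trans hS)
  · rfl

theorem pmfP_le_rfun (hρ : 0 ≤ ρ) (hk : 1 ≤ k) (hkN : k < N) : pmfP ρ N k ≤ rfun ρ N k := by
  have hS := one_le_sum_range_rfun (N := N) hρ hk
  have hr := rfun_nonneg (N := N) (k := k) hρ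
  rw [pmfP, tailP, tailP, if_pos hkN.le, if_pos (by omega : k + 1 ≤ N), sum_range_succ]
  set S := ∑ i ∈ range k, rfun ρ N i
  rw [inv_sub_inv (by positivity) (by positivity), div_le_iff₀ (by positivity)]
  have h1 : 1 ≤ S * (S + rfun ρ N k) := one_le_mul_of_one_le_of_one_le hS (by linarith)
  nlinarith

theorem rfun_one_sub_sq_le_pmfP_one (hρ : 0 ≤ ρ) (hN : 2 ≤ N) :
    rfun ρ N 1 - rfun ρ N 1 ^ 2 ≤ pmfP ρ N 1 := by
  have hr := rfun_nonneg (N := N) (k := 1) hρ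
  rw [pmfP, tailP_one (by omega), tailP, if_pos hN, sum_range_succ, sum_range_one, rfun_zero,
    le_sub_iff_add_le, ← le_sub_iff_add_le', inv_le_iff_one_le_mul₀ (by positivity)]
  nlinarith [pow_nonneg hr 3]

theorem sum_pmfP (hN : 1 ≤ N) : ∑ k ∈ Icc 1 N, pmfP ρ N k = 1 := by
  simp only [pmfP]
  rw [sum_Icc_one_sub_succ, tailP_one hN, tailP_of_lt (by omega), sub_zero]

theorem sum_mul_pmfP : ∑ k ∈ Icc 1 N, (k : ℝ) * pmfP ρ N k = EH ρ N := by
  simp only [pmfP]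
  rw [sum_Icc_one_mul_sub_succ, tailP_of_lt (by omega), mul_zero, sub_zero, EH]

theorem VarH_eq (hN : 1 ≤ N) :
    VarH ρ N = ∑ k ∈ Icc 1 N, ((N : ℝ) - k) ^ 2 * pmfP ρ N k - (N - EH ρ N) ^ 2 :=
  sum_sq_sub_mul_eq _ (sum_pmfP hN) sum_mul_pmfP _

theorem sub_EH_eq (hN : 1 ≤ N) :
    (N : ℝ) - EH ρ N = ∑ k ∈ Icc 1 N, ((N : ℝ) - k) * pmfP ρ N k := by
  simp only [sub_mul, sum_sub_distrib, ← mul_sum, sum_pmfP hN, sum_mul_pmfP, mul_one]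

theorem sum_mul_pmfP_le_sum_mul_rfun (hρ : 0 ≤ ρ) {f : ℕ → ℝ} (hf : ∀ k ∈ Icc 1 N, 0 ≤ f k)
    (hfN : f N = 0) : ∑ k ∈ Icc 1 N, f k * pmfP ρ N k ≤ ∑ k ∈ Icc 1 (N - 1), f k * rfun ρ N k := by
  rcases N with _ | n
  · simp
  rw [sum_Icc_succ_top (by omega), hfN, zero_mul, add_zero, Nat.add_sub_cancel]
  refine sum_le_sum fun k hk => ?_
  rw [mem_Icc] at hk
  exact mul_le_mul_of_nonneg_left (pmfP_le_rfun hρ hk.1 (by omega)) (hf k (by simp; omega))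

theorem sum_sq_sub_mul_rfun_le (hρ : 1 ≤ ρ) (N : ℕ) :
    ∑ k ∈ Icc 2 (N - 1), ((N : ℝ) - k) ^ 2 * rfun ρ N k ≤ 9 := by
  rcases N with _ | n
  · simp
  calc _ ≤ ∑ k ∈ Icc 2 n, ((n : ℝ) + 1 - k) ^ 2 / n.choose k := by
        rw [Nat.add_sub_cancel]
        refine sum_le_sum fun k _ => ?_
        have := rfun_le_inv_choose (N := n + 1) (k := k) hρ
        rw [Nat.add_sub_cancel] at this
        push_cast
        exact mul_le_mul_of_nonneg_left this (sq_nonneg _)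
    _ ≤ 9 := sum_sq_sub_div_choose_le n

theorem sum_mul_pmfP_le_add_nine (hρ : 1 ≤ ρ) (hN : 2 ≤ N) {f : ℕ → ℝ}
    (hf : ∀ k ∈ Icc 1 N, 0 ≤ f k ∧ f k ≤ ((N : ℝ) - k) ^ 2) (hfN : f N = 0) :
    ∑ k ∈ Icc 1 N, f k * pmfP ρ N k ≤ f 1 * rfun ρ N 1 + 9 := by
  have hρ0 : 0 ≤ ρ := zero_le_one.trans hρ
  have hrest : ∑ k ∈ Icc 2 (N - 1), f k * rfun ρ N k ≤ 9 := by
    refine le_trans (sum_le_sum fun k hk => ?_) (sum_sq_sub_mul_rfun_le hρ N)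
    rw [mem_Icc] at hk
    exact mul_le_mul_of_nonneg_right (hf k (by simp; omega)).2 (rfun_nonneg hρ0)
  calc _ ≤ ∑ k ∈ Icc 1 (N - 1), f k * rfun ρ N k :=
        sum_mul_pmfP_le_sum_mul_rfun hρ0 (fun k hk => (hf k hk).1) hfN
    _ = f 1 * rfun ρ N 1 + ∑ k ∈ Icc 2 (N - 1), f k * rfun ρ N k := by
        rw [← add_sum_Ioc_eq_sum_Icc (by omega), ← Icc_add_one_left_eq_Ioc]
        rfl
    _ ≤ f 1 * rfun ρ N 1 + 9 := by linarith

theorem sub_EH_le (hρ : 1 ≤ ρ) (hN : 2 ≤ N) : (N : ℝ) - EH ρ N ≤ ρ⁻¹ + 9 := by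
  rw [sub_EH_eq (by omega), ← sub_one_mul_rfun_one hN]
  refine (sum_mul_pmfP_le_add_nine hρ hN (f := fun k => (N : ℝ) - k) (fun k hk => ?_)
    (sub_self _)).trans_eq (by rw [Nat.cast_one])
  rw [mem_Icc] at hk
  rcases hk.2.eq_or_lt with rfl | hlt
  · simp
  · have : (k : ℝ) + 1 ≤ N := by exact_mod_cast hlt
    constructor <;> nlinarith

theorem sub_EH_nonneg (hρ : 0 ≤ ρ) (hN : 1 ≤ N) : 0 ≤ (N : ℝ) - EH ρ N := by
  rw [sub_EH_eq hN]
  refine sum_nonneg fun k hk => ?_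
  rw [mem_Icc] at hk
  have : (k : ℝ) ≤ N := by exact_mod_cast hk.2
  exact mul_nonneg (by linarith) (pmfP_nonneg hρ hk.1)

theorem sum_sq_sub_mul_pmfP_le (hρ : 1 ≤ ρ) (hN : 2 ≤ N) :
    ∑ k ∈ Icc 1 N, ((N : ℝ) - k) ^ 2 * pmfP ρ N k ≤ ((N : ℝ) - 1) * ρ⁻¹ + 9 := by
  rw [← sub_one_mul_rfun_one hN]
  convert sum_mul_pmfP_le_add_nine hρ hN (f := fun k => ((N : ℝ) - k) ^ 2)
    (fun k _ => ⟨sq_nonneg _, le_rfl⟩) (by simp) using 2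
  push_cast; ring

theorem VarH_le (hρ : 1 ≤ ρ) (hN : 2 ≤ N) : VarH ρ N ≤ ((N : ℝ) - 1) * ρ⁻¹ + 9 := by
  rw [VarH_eq (by omega)]
  linarith [sum_sq_sub_mul_pmfP_le hρ hN, sq_nonneg ((N : ℝ) - EH ρ N)]

theorem le_VarH (hρ : 1 ≤ ρ) (hN : 2 ≤ N) : ((N : ℝ) - 1) * ρ⁻¹ - 101 ≤ VarH ρ N := by
  have hρ0 : 0 ≤ ρ := zero_le_one.trans hρ
  have hρinv : ρ⁻¹ ≤ 1 := inv_le_one_of_one_le₀ hρ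
  have hρinv_sq : ρ⁻¹ ^ 2 ≤ 1 := pow_le_one₀ (by positivity) hρinv
  have hmain :
      ((N : ℝ) - 1) ^ 2 * pmfP ρ N 1 ≤ ∑ k ∈ Icc 1 N, ((N : ℝ) - k) ^ 2 * pmfP ρ N k := by
    have h := single_le_sum (f := fun k : ℕ => ((N : ℝ) - k) ^ 2 * pmfP ρ N k)
      (fun k hk => mul_nonneg (sq_nonneg _) (pmfP_nonneg hρ0 (mem_Icc.mp hk).1))
      (show 1 ∈ Icc 1 N from mem_Icc.mpr ⟨le_rfl, by omega⟩)
    simpa using h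
  have hpmf : ((N : ℝ) - 1) * ρ⁻¹ - ρ⁻¹ ^ 2 ≤ ((N : ℝ) - 1) ^ 2 * pmfP ρ N 1 := by
    have h := mul_le_mul_of_nonneg_left (rfun_one_sub_sq_le_pmfP_one hρ0 hN)
      (sq_nonneg ((N : ℝ) - 1))
    rw [← sub_one_mul_rfun_one hN]
    linarith
  have hmean : ((N : ℝ) - EH ρ N) ^ 2 ≤ 100 := by
    have h0 := sub_EH_nonneg hρ0 (by omega : 1 ≤ N)
    have h1 := sub_EH_le hρ hN
    nlinarith
  rw [VarH_eq (by omega)]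
  linarith

end HeightDistribution

theorem var_height_asymptotics_rho_ge_one (ρ : ℝ) (hρ : 1 ≤ ρ) :
    Tendsto (fun N : ℕ => VarH ρ N / N) atTop (𝓝 (1 / ρ)) := by
  refine tendsto_div_natCast_of_abs_sub_mul_le (B := 102) ?_
  filter_upwards [eventually_ge_atTop 2] with N hN
  have hρinv : ρ⁻¹ ≤ 1 := inv_le_one_of_one_le₀ hρ
  have hρinv0 : 0 ≤ ρ⁻¹ := by positivity
  rw [abs_le, one_div]
  constructor <;> linarith [le_VarH hρ hN, VarH_le hρ hN]
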